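/- (Proposition: exponent lower bound for simple configurations). For every simple configuration (F, π) with F = (V, E, h, p, q) and partition π, the exponent η(F, π) := |L₀(F,π)|/4 + 1 − |π| + (1/2) ∑_{v ∈ V∖R(F)} p_v satisfies η(F, π) ≥ (|R(F)| − |R₀(F)|)/4, where |R(F)| − |R₀(F)| is the number of non-trivial roots of F. -/

import Mathlib

open Filter Matrix
open scoped ENNReal NNReal Topology

noncomputable section
attribute [local instance] Classical.propDecidable

/-- A decorated forest `F = (V, E, h, p, q)` (Definition 5.1 of the paper).
Vertices are `{0, …, n-1}`; `parent v = some u` encodes the directed edge `u → v`.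
The decreasing height function along edges guarantees that the directed graph
`(V, E)` is a forest. -/
structure DecForest where
  n : ℕ
  parent : Fin n → Option (Fin n)
  height : Fin n → ℕ
  pw : Fin n → ℕ
  qw : Fin n → ℕ
  height_parent : ∀ v u, parent v = some u → height v + 1 = height u
  pw_pos : ∀ v, parent v ≠ none → 1 ≤ pw v
  height_zero_no_children : ∀ u, height u = 0 → ∀ v, parent v ≠ some u
  childless_qw : ∀ u, (∀ v, parent v ≠ some u) → 1 ≤ qw u → height u = 0
  conservation : ∀ u : Fin n, (∃ v, parent v = some u) →
    qw u = ∑ v ∈ Finset.univ.filter (fun v => parent v = some u), pw v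

namespace DecForest

variable (F : DecForest)

/-- `v` is a root of the forest. -/
def isRoot (v : Fin F.n) : Prop := F.parent v = none

/-- The set of children of a vertex. -/
def children (u : Fin F.n) : Finset (Fin F.n) :=
  Finset.univ.filter fun v => F.parent v = some u

/-- The number of children of a vertex. -/
def childCount (u : Fin F.n) : ℕ := (F.children u).card

/-- `v` is a leaf: a non-root vertex without children. -/
def isLeaf (v : Fin F.n) : Prop := F.parent v ≠ none ∧ F.childCount v = 0

/-- `v` is a trivial root: a root without children. -/
def isTrivialRoot (v : Fin F.n) : Prop := F.parent v = none ∧ F.childCount v = 0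

/-- Two (non-root) vertices are siblings if they are distinct and share a parent. -/
def sibling (u v : Fin F.n) : Prop :=
  u ≠ v ∧ ∃ w, F.parent u = some w ∧ F.parent v = some w

/-- The number of non-trivial roots `|R(F)| - |R₀(F)|`. -/
def nontrivialRootCount : ℕ :=
  (Finset.univ.filter fun v => F.isRoot v ∧ F.childCount v ≠ 0).card

end DecForest

/-- The polynomial `γ(Ψ; F, ℓ) = N⁻¹ ∏_{u→v ∈ E} Ψ_{ℓ_u ℓ_v}^{p_v}`. -/
def gammaPoly {N : ℕ} (F : DecForest) (Ψ : Matrix (Fin N) (Fin N) ℝ)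
    (ℓ : Fin F.n → Fin N) : ℝ :=
  (N : ℝ)⁻¹ * ∏ v : Fin F.n, (F.parent v).elim 1 fun u => Ψ (ℓ u) (ℓ v) ^ F.pw v

/-- A coloring `ℓ` is consistent with the partition whose blocks are the fibers of `b`. -/
def Consistent {n N : ℕ} (b : Fin n → Fin n) (ℓ : Fin n → Fin N) : Prop :=
  ∀ u v, ℓ u = ℓ v ↔ b u = b v

/-- `Γ(Ψ; F, π) = ∑_{ℓ ∈ C(π)} γ(Ψ; F, ℓ)`, the partition `π` being encoded by the
fibers of the function `b`. -/
def GammaSum {N : ℕ} (F : DecForest) (b : Fin F.n → Fin F.n)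
    (Ψ : Matrix (Fin N) (Fin N) ℝ) : ℝ :=
  ∑ ℓ ∈ Finset.univ.filter (fun ℓ : Fin F.n → Fin N => Consistent b ℓ), gammaPoly F Ψ ℓ

/-- The number `|π|` of blocks of the partition encoded by `b`. -/
def numBlocks {n : ℕ} (b : Fin n → Fin n) : ℕ := (Finset.univ.image b).card

/-- The cardinality of the block of `v` in the partition encoded by `b`. -/
def blockCard {n : ℕ} (b : Fin n → Fin n) (v : Fin n) : ℕ :=
  (Finset.univ.filter fun u => b u = b v).card

/-- `v, v'` is a pair of nullifying leaves (with the corresponding pair of nullifying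
edges) for the configuration `(F, π)`. -/
def NullifyingPair (F : DecForest) (b : Fin F.n → Fin F.n) (v v' : Fin F.n) : Prop :=
  v ≠ v' ∧ F.isLeaf v ∧ F.isLeaf v' ∧ F.pw v = 1 ∧ F.pw v' = 1 ∧
    b v = b v' ∧ (∀ u, b u = b v → u = v ∨ u = v') ∧
    ∀ u u', F.parent v = some u → F.parent v' = some u' → b u ≠ b u'

/-- `v, v'` is a removable pair of leaves (with the corresponding removable pair of
edges) for the configuration `(F, π)`. -/
def RemovablePair (F : DecForest) (b : Fin F.n → Fin F.n) (v v' : Fin F.n) : Prop :=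
  v ≠ v' ∧ F.isLeaf v ∧ F.isLeaf v' ∧ F.pw v = 1 ∧ F.pw v' = 1 ∧
    b v = b v' ∧ (∀ u, b u = b v → u = v ∨ u = v') ∧
    ∀ u u', F.parent v = some u → F.parent v' = some u' → b u = b u'

/-- The number `|L₀(F, π)|` of nullifying leaves of the configuration. -/
def nullLeafCount (F : DecForest) (b : Fin F.n → Fin F.n) : ℕ :=
  (Finset.univ.filter fun v => ∃ v', NullifyingPair F b v v').card

/-- The exponent `η(F, π) = |L₀(F,π)|/4 + 1 - |π| + (1/2) ∑_{v ∉ R(F)} p_v`. -/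
def etaExponent (F : DecForest) (b : Fin F.n → Fin F.n) : ℝ :=
  (nullLeafCount F b : ℝ) / 4 + 1 - (numBlocks b : ℝ) +
    (1 / 2 : ℝ) * ∑ v ∈ Finset.univ.filter (fun v => F.parent v ≠ none), (F.pw v : ℝ)

/-- The contribution of a vertex to the parity count of its block (also the exponent of
its sign variable): `q_u` for non-trivial roots, `p_v` for leaves, `p_u + q_u` for
internal non-root vertices, `0` for trivial roots. -/
def vertexContrib (F : DecForest) (v : Fin F.n) : ℕ :=
  if F.parent v = none then (if F.childCount v = 0 then 0 else F.qw v)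
  else if F.childCount v = 0 then F.pw v
  else F.pw v + F.qw v

/-- The parity rule/property: the total contribution of every block is even. -/
def ParityProp (F : DecForest) (b : Fin F.n → Fin F.n) : Prop :=
  ∀ v : Fin F.n,
    Even (∑ u ∈ Finset.univ.filter (fun u => b u = b v), vertexContrib F u)

/-- Relevant configurations (Definition 5.6 of the paper). -/
structure RelevantConfig (F : DecForest) (b : Fin F.n → Fin F.n) : Prop where
  root_rule : ∀ u v, F.isRoot u → F.isRoot v → b u = b v
  sibling_rule : ∀ u v, F.sibling u v → b u ≠ b v
  forbidden_weights : ∀ v, ¬F.isRoot v →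
    ¬(F.pw v = 1 ∧ F.qw v = 1) ∧ ¬(F.pw v = 2 ∧ F.qw v = 0)
  leaf_rule : ∀ v, F.isLeaf v → 1 ≤ F.qw v → blockCard b v ≠ 1
  trivial_root_rule : ∀ v, F.isTrivialRoot v → 1 ≤ F.qw v → blockCard b v ≠ 1
  parity_rule : ParityProp F b

/-- Simple configurations (Definition 5.9 of the paper). -/
structure SimpleConfig (F : DecForest) (b : Fin F.n → Fin F.n) : Prop where
  root_prop : ∀ u v, F.isRoot u → F.isRoot v → b u = b v
  singleton_leaf : ∀ v, F.isLeaf v → blockCard b v = 1 → 4 ≤ F.pw v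
  paired_leaf : ∀ v v', v ≠ v' → F.isLeaf v → F.isLeaf v' → F.pw v = 1 → F.pw v' = 1 →
    b v = b v' → (∀ u, b u = b v → u = v ∨ u = v') →
    ∀ u u', F.parent v = some u → F.parent v' = some u' → b u ≠ b u'
  forbidden_weights : ∀ v, ¬F.isRoot v → blockCard b v = 1 →
    ¬(F.pw v = 1 ∧ F.qw v = 1) ∧ ¬(F.pw v = 2 ∧ F.qw v = 0)
  parity_prop : ParityProp F b

/-- Semi-simple configurations (Definition 7.1 of the paper). -/
structure SemiSimpleConfig (F : DecForest) (b : Fin F.n → Fin F.n) : Prop where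
  root_prop : ∀ u v, F.isRoot u → F.isRoot v → b u = b v
  sibling_prop : ∀ u v, F.sibling u v →
    ¬(b u = b v ∧ ∀ w, b w = b u → w = u ∨ w = v)
  singleton_leaf : ∀ v, F.isLeaf v → blockCard b v = 1 → 4 ≤ F.pw v
  forbidden_weights : ∀ v, ¬F.isRoot v → blockCard b v = 1 →
    ¬(F.pw v = 1 ∧ F.qw v = 1) ∧ ¬(F.pw v = 2 ∧ F.qw v = 0)
  parity_prop : ParityProp F b

end

/-!
Give every vertex the weight `vertexContrib F v`, plus `1` if it is a nullifying leaf. By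
conservation of weight at every internal vertex, the total of the `vertexContrib F v` is
`2 ∑_{v ∉ R(F)} p_v`, so the total weight is `2 ∑ p_v + |L₀|`. Every block without a root
has even weight, each of its vertices contributing at least `1`; the simple-configuration
axioms rule out weight `2` except for a pair of leaves of weight one, and these are nullifying,
which lifts their weight to `4`. Hence each of the at least `|π| - 1` blocks without a root
weighs at least `4`, while the single block holding the roots weighs at least the number of
non-trivial roots, since `q_r ≥ 1` at each of them.
-/

noncomputable section
attribute [local instance] Classical.propDecidable

namespace DecForest

variable (F : DecForest)

@[simp]
theorem mem_children {u v : Fin F.n} : v ∈ F.children u ↔ F.parent v = some u := by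
  simp [children]

theorem one_le_qw_of_childCount_ne_zero {u : Fin F.n} (hu : F.childCount u ≠ 0) :
    1 ≤ F.qw u := by
  obtain ⟨v, hv⟩ := Finset.card_pos.mp (Nat.pos_of_ne_zero hu)
  rw [mem_children] at hv
  rw [F.conservation u ⟨v, hv⟩]
  calc 1 ≤ F.pw v := F.pw_pos v (by simp [hv])
    _ ≤ _ := Finset.single_le_sum (fun _ _ => Nat.zero_le _) (by simp [hv])

theorem vertexContrib_eq (v : Fin F.n) :
    vertexContrib F v = (if F.parent v ≠ none then F.pw v else 0) +
      (if F.childCount v ≠ 0 then F.qw v else 0) := by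
  unfold vertexContrib
  split_ifs <;> simp_all

theorem one_le_vertexContrib {v : Fin F.n} (hv : F.parent v ≠ none) : 1 ≤ vertexContrib F v := by
  have := F.pw_pos v hv
  rw [vertexContrib_eq, if_pos hv]
  omega

theorem isLeaf_and_pw_eq_one_of_vertexContrib_eq_one {v : Fin F.n} (hv : F.parent v ≠ none)
    (h : vertexContrib F v = 1) : F.isLeaf v ∧ F.pw v = 1 := by
  have := F.pw_pos v hv
  rw [vertexContrib_eq, if_pos hv] at h
  by_cases hc : F.childCount v = 0
  · simp_all [isLeaf]
  · have := F.one_le_qw_of_childCount_ne_zero hc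
    rw [if_pos hc] at h
    omega

theorem sum_pw_eq_sum_qw :
    ∑ v ∈ Finset.univ.filter (fun v => F.parent v ≠ none), F.pw v =
      ∑ u ∈ Finset.univ.filter (fun u => F.childCount u ≠ 0), F.qw u := by
  have hchildren : ∑ u, ∑ v ∈ F.children u, F.pw v =
      ∑ u ∈ Finset.univ.filter (fun u => F.childCount u ≠ 0), F.qw u := by
    rw [Finset.sum_filter]
    refine Finset.sum_congr rfl fun u _ => ?_
    split_ifs with hu
    · obtain ⟨v, hv⟩ := Finset.card_pos.mp (Nat.pos_of_ne_zero hu)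
      exact (F.conservation u ⟨v, F.mem_children.mp hv⟩).symm
    · rw [Finset.card_eq_zero.mp (not_not.mp hu), Finset.sum_empty]
  have hfibers := Finset.sum_fiberwise Finset.univ F.parent F.pw
  rw [Fintype.sum_option] at hfibers
  have hsplit := Finset.sum_filter_add_sum_filter_not Finset.univ (fun v => F.parent v = none) F.pw
  simp only [children] at hchildren
  simp only [ne_eq] at hchildren ⊢
  omega

theorem sum_vertexContrib :
    ∑ v, vertexContrib F v =
      2 * ∑ v ∈ Finset.univ.filter (fun v => F.parent v ≠ none), F.pw v := by
  simp only [vertexContrib_eq, Finset.sum_add_distrib, ← Finset.sum_filter]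
  rw [← F.sum_pw_eq_sum_qw]
  ring

end DecForest

def exponentWeight (F : DecForest) (b : Fin F.n → Fin F.n) (v : Fin F.n) : ℕ :=
  vertexContrib F v + if ∃ v', NullifyingPair F b v v' then 1 else 0

theorem sum_exponentWeight (F : DecForest) (b : Fin F.n → Fin F.n) :
    ∑ v, exponentWeight F b v =
      2 * ∑ v ∈ Finset.univ.filter (fun v => F.parent v ≠ none), F.pw v +
        nullLeafCount F b := by
  rw [← F.sum_vertexContrib, nullLeafCount, Finset.card_filter, ← Finset.sum_add_distrib]
  rfl

namespace SimpleConfig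

variable {F : DecForest} {b : Fin F.n → Fin F.n} (hconf : SimpleConfig F b)
include hconf

theorem vertexContrib_ne_two_of_blockCard_eq_one {v : Fin F.n} (hv : F.parent v ≠ none)
    (hblock : blockCard b v = 1) : vertexContrib F v ≠ 2 := by
  have := F.pw_pos v hv
  rw [F.vertexContrib_eq, if_pos hv]
  by_cases hc : F.childCount v = 0
  · have := hconf.singleton_leaf v ⟨hv, hc⟩ hblock
    rw [if_neg (not_not.mpr hc)]
    omega
  · have := F.one_le_qw_of_childCount_ne_zero hc
    have := (hconf.forbidden_weights v hv hblock).1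
    rw [if_pos hc]
    omega

theorem nullifyingPair_of_vertexContrib_eq_one {v v' : Fin F.n} (hvv' : v ≠ v')
    (hv : F.parent v ≠ none) (hv' : F.parent v' ≠ none) (hcv : vertexContrib F v = 1)
    (hcv' : vertexContrib F v' = 1) (hbv : b v = b v')
    (hblock : ∀ u, b u = b v → u = v ∨ u = v') : NullifyingPair F b v v' := by
  obtain ⟨hleaf, hpw⟩ := F.isLeaf_and_pw_eq_one_of_vertexContrib_eq_one hv hcv
  obtain ⟨hleaf', hpw'⟩ := F.isLeaf_and_pw_eq_one_of_vertexContrib_eq_one hv' hcv'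
  exact ⟨hvv', hleaf, hleaf', hpw, hpw', hbv, hblock,
    hconf.paired_leaf v v' hvv' hleaf hleaf' hpw hpw' hbv hblock⟩

theorem four_le_sum_exponentWeight_of_rootless_block (v₀ : Fin F.n)
    (hroot : ∀ u, b u = b v₀ → F.parent u ≠ none) :
    4 ≤ ∑ u ∈ Finset.univ.filter (fun u => b u = b v₀), exponentWeight F b u := by
  set B := Finset.univ.filter (fun u => b u = b v₀) with hB
  have hmem : ∀ u, u ∈ B ↔ b u = b v₀ := by simp [hB]
  have hpos : ∀ u ∈ B, 1 ≤ vertexContrib F u :=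
    fun u hu => F.one_le_vertexContrib (hroot u ((hmem u).mp hu))
  have hle : ∑ u ∈ B, vertexContrib F u ≤ ∑ u ∈ B, exponentWeight F b u :=
    Finset.sum_le_sum fun u _ => Nat.le_add_right _ _
  obtain h4 | hlt := le_or_gt 4 (∑ u ∈ B, vertexContrib F u)
  · exact h4.trans hle
  have hcard : B.card ≤ ∑ u ∈ B, vertexContrib F u := by
    simpa using Finset.card_nsmul_le_sum B _ 1 hpos
  have hcard_pos : 0 < B.card := Finset.card_pos.mpr ⟨v₀, (hmem v₀).mpr rfl⟩
  -- an even sum in `[1, 4)` is `2`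
  have hsum : ∑ u ∈ B, vertexContrib F u = 2 := by
    obtain ⟨k, hk⟩ : Even (∑ u ∈ B, vertexContrib F u) := hconf.parity_prop v₀
    omega
  obtain hcard1 | hcard2 : B.card = 1 ∨ B.card = 2 := by omega
  · obtain ⟨v, hBv⟩ := Finset.card_eq_one.mp hcard1
    have hv₀ : v₀ = v := by simpa [hBv] using (hmem v₀).mpr rfl
    subst hv₀
    rw [hBv, Finset.sum_singleton] at hsum
    exact absurd hsum (hconf.vertexContrib_ne_two_of_blockCard_eq_one
      (hroot v₀ rfl) hcard1)
  · obtain ⟨v, v', hvv', hBvv'⟩ := Finset.card_eq_two.mp hcard2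
    have hbv : b v = b v₀ := (hmem v).mp (by simp [hBvv'])
    have hbv' : b v' = b v₀ := (hmem v').mp (by simp [hBvv'])
    have hblock : ∀ u, b u = b v₀ → u = v ∨ u = v' := fun u hu => by
      simpa [hBvv'] using (hmem u).mpr hu
    have hcv := hpos v (by simp [hBvv'])
    have hcv' := hpos v' (by simp [hBvv'])
    rw [hBvv', Finset.sum_pair hvv'] at hsum
    have hpair := hconf.nullifyingPair_of_vertexContrib_eq_one hvv' (hroot v hbv)
      (hroot v' hbv') (by omega) (by omega) (hbv.trans hbv'.symm)
      (fun u hu => hblock u (hu.trans hbv))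
    have hpair' := hconf.nullifyingPair_of_vertexContrib_eq_one hvv'.symm (hroot v' hbv')
      (hroot v hbv) (by omega) (by omega) (hbv'.trans hbv.symm)
      (fun u hu => (hblock u (hu.trans hbv')).symm)
    rw [hBvv', Finset.sum_pair hvv', exponentWeight, exponentWeight,
      if_pos ⟨v', hpair⟩, if_pos ⟨v, hpair'⟩]
    omega

theorem nontrivialRootCount_le_sum_exponentWeight {r₀ : Fin F.n} (hr₀ : F.isRoot r₀) :
    F.nontrivialRootCount ≤
      ∑ u ∈ Finset.univ.filter (fun u => b u = b r₀), exponentWeight F b u := by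
  have hqw : ∀ u ∈ Finset.univ.filter (fun v => F.isRoot v ∧ F.childCount v ≠ 0),
      1 ≤ exponentWeight F b u := by
    intro u hu
    obtain ⟨hroot, hc⟩ := (Finset.mem_filter.mp hu).2
    have := F.one_le_qw_of_childCount_ne_zero hc
    rw [exponentWeight, vertexContrib, if_pos (show F.parent u = none from hroot), if_neg hc]
    omega
  calc F.nontrivialRootCount
      ≤ ∑ u ∈ Finset.univ.filter (fun v => F.isRoot v ∧ F.childCount v ≠ 0),
          exponentWeight F b u := by
        simpa [DecForest.nontrivialRootCount] using Finset.card_nsmul_le_sum _ _ 1 hqw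
    _ ≤ _ := Finset.sum_le_sum_of_subset fun u hu => by
        simpa using hconf.root_prop u r₀ (Finset.mem_filter.mp hu).2.1 hr₀

theorem four_mul_numBlocks_add_nontrivialRootCount_le :
    4 * numBlocks b + F.nontrivialRootCount ≤
      2 * ∑ v ∈ Finset.univ.filter (fun v => F.parent v ≠ none), F.pw v +
        nullLeafCount F b + 4 := by
  set blockWeight : Fin F.n → ℕ := fun j =>
    ∑ u ∈ Finset.univ.filter (fun u => b u = j), exponentWeight F b u
  have hblocks : (Finset.univ.image b).sum blockWeight = ∑ u, exponentWeight F b u :=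
    Finset.sum_fiberwise_of_maps_to (fun u _ => Finset.mem_image_of_mem b (Finset.mem_univ u)) _
  have hrootless : ∀ j ∈ Finset.univ.image b, (∀ u, b u = j → F.parent u ≠ none) →
      4 ≤ blockWeight j := by
    intro j hj hroot
    obtain ⟨v₀, -, rfl⟩ := Finset.mem_image.mp hj
    exact hconf.four_le_sum_exponentWeight_of_rootless_block v₀ hroot
  rw [← sum_exponentWeight, numBlocks]
  by_cases hroots : ∃ r₀, F.isRoot r₀
  · obtain ⟨r₀, hr₀⟩ := hroots
    have hr₀mem : b r₀ ∈ Finset.univ.image b := Finset.mem_image_of_mem b (Finset.mem_univ r₀)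
    have hrest := Finset.card_nsmul_le_sum ((Finset.univ.image b).erase (b r₀)) blockWeight 4
      fun j hj => hrootless j (Finset.mem_of_mem_erase hj) fun u hu hroot =>
        Finset.ne_of_mem_erase hj (hu ▸ hconf.root_prop u r₀ hroot hr₀)
    have hroot_block : F.nontrivialRootCount ≤ blockWeight (b r₀) :=
      hconf.nontrivialRootCount_le_sum_exponentWeight hr₀
    rw [smul_eq_mul] at hrest
    have := Finset.card_erase_add_one hr₀mem
    have := Finset.add_sum_erase _ blockWeight hr₀mem
    linarith
  · have hnone : F.nontrivialRootCount = 0 := by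
      simp_all [DecForest.nontrivialRootCount]
    have := Finset.card_nsmul_le_sum (Finset.univ.image b) blockWeight 4
      fun j hj => hrootless j hj fun u _ hroot => hroots ⟨u, hroot⟩
    rw [smul_eq_mul] at this
    linarith

end SimpleConfig

/-- **Proposition (exponent lower bound for simple configurations).** -/
theorem eta_exponent_lower_bound
    (F : DecForest) (b : Fin F.n → Fin F.n) (hconf : SimpleConfig F b) :
    (F.nontrivialRootCount : ℝ) / 4 ≤ etaExponent F b := by
  have h : (4 * numBlocks b + F.nontrivialRootCount : ℝ) ≤
      2 * ((∑ v ∈ Finset.univ.filter (fun v => F.parent v ≠ none), F.pw v : ℕ) : ℝ) +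
        nullLeafCount F b + 4 := by
    exact_mod_cast hconf.four_mul_numBlocks_add_nontrivialRootCount_le
  rw [etaExponent, ← Nat.cast_sum]
  linarith

end
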